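/- Let G be a finite bipartite graph with parts V⁺ and V⁻ and a positive edge-weight function R with edge weights around each vertex summing to 2. If A ⊆ V⁺ satisfies |N(A)| = |A|, then every edge incident to a vertex of N(A) has its white endpoint in A; in particular N(N(A)) = A. -/

import Mathlib

open Finset

/-!
Let `S₁` be the edges leaving `A` and `S₂` the edges entering `N(A)`, so `S₁ ⊆ S₂`. Grouping by
white endpoints, `S₁` has total weight `2|A|`; grouping by black endpoints, `S₂` has total weight
`2|N(A)|`. When `|N(A)| = |A|` the two totals agree, and since every weight is positive this forces
`S₁ = S₂`. Every white vertex has an edge (its weights sum to `2 ≠ 0`), so `N(N(A))`, the set of white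
endpoints of `S₂ = S₁`, is `A`.
-/

namespace Finset

variable {ι κ M : Type*}

theorem sum_filter_mem_eq_card_nsmul [AddCommMonoid M] [DecidableEq κ] (s : Finset ι)
    (t : Finset κ) (g : ι → κ) (f : ι → M) {c : M}
    (h : ∀ j ∈ t, ∑ i ∈ s with g i = j, f i = c) :
    ∑ i ∈ s with g i ∈ t, f i = #t • c := by
  rw [← sum_fiberwise_eq_sum_filter, sum_congr rfl h, sum_const]

theorem eq_of_subset_of_sum_eq_of_pos [AddCommMonoid M] [PartialOrder M]
    [IsOrderedCancelAddMonoid M] {s t : Finset ι} {f : ι → M} (hst : s ⊆ t)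
    (hpos : ∀ i ∈ t, 0 < f i) (hsum : ∑ i ∈ t, f i = ∑ i ∈ s, f i) : s = t := by
  refine hst.antisymm fun i hit => ?_
  by_contra his
  exact (sum_lt_sum_of_subset hst hit his (hpos i hit) fun j hjt _ => (hpos j hjt).le).ne' hsum

theorem image_fst_filter_fst_mem_eq {α β : Type*} [DecidableEq α] (E : Finset (α × β))
    (A : Finset α) (hcover : ∀ a ∈ A, ∃ e ∈ E, e.1 = a) :
    (E.filter fun e => e.1 ∈ A).image Prod.fst = A := by
  ext a
  simp only [mem_image, mem_filter]
  constructor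
  · rintro ⟨e, ⟨-, hea⟩, rfl⟩
    exact hea
  · intro ha
    obtain ⟨e, he, rfl⟩ := hcover a ha
    exact ⟨e, ⟨he, ha⟩, rfl⟩

end Finset

theorem hall_equality_case_general {P N : Type*}
    [DecidableEq P] [DecidableEq N]
    (E : Finset (P × N)) (R : P × N → ℝ)
    (hpos : ∀ e ∈ E, 0 < R e)
    (hwhite : ∀ p : P, ∑ e ∈ E.filter (fun e => e.1 = p), R e = 2)
    (hblack : ∀ n : N, ∑ e ∈ E.filter (fun e => e.2 = n), R e = 2)
    (A : Finset P)
    (heq : ((E.filter (fun e => e.1 ∈ A)).image Prod.snd).card = A.card) :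
    (∀ e ∈ E, e.2 ∈ (E.filter (fun e => e.1 ∈ A)).image Prod.snd → e.1 ∈ A) ∧
    (E.filter (fun e => e.2 ∈ (E.filter (fun e' => e'.1 ∈ A)).image Prod.snd)).image Prod.fst
      = A := by
  set NA := (E.filter fun e => e.1 ∈ A).image Prod.snd
  have hsub : E.filter (fun e => e.1 ∈ A) ⊆ E.filter fun e => e.2 ∈ NA := fun e he =>
    mem_filter.2 ⟨(mem_filter.1 he).1, mem_image_of_mem _ he⟩
  have hsame : E.filter (fun e => e.1 ∈ A) = E.filter fun e => e.2 ∈ NA := by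
    refine eq_of_subset_of_sum_eq_of_pos hsub (fun e he => hpos e (mem_filter.1 he).1) ?_
    rw [sum_filter_mem_eq_card_nsmul _ _ _ _ fun n _ => hblack n,
      sum_filter_mem_eq_card_nsmul _ _ _ _ fun p _ => hwhite p, heq]
  have hcover : ∀ p ∈ A, ∃ e ∈ E, e.1 = p := fun p _ => by
    obtain ⟨e, he, -⟩ := exists_ne_zero_of_sum_ne_zero ((hwhite p).trans_ne two_ne_zero)
    exact ⟨e, mem_filter.1 he⟩
  refine ⟨fun e he hn => (mem_filter.1 (hsame.symm.subset (mem_filter.2 ⟨he, hn⟩))).2, ?_⟩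
  rw [← hsame]
  exact image_fst_filter_fst_mem_eq E A hcover

/-- Equality case of the weighted Hall argument: if `|N(A)| = |A|`, then every
edge incident to a black vertex of `N(A)` has its white endpoint in `A`; in particular
`N(N(A)) = A`. -/
theorem hall_equality_case {P N : Type*} [Fintype P] [Fintype N]
    [DecidableEq P] [DecidableEq N]
    (E : Finset (P × N)) (R : P × N → ℝ)
    (hpos : ∀ e ∈ E, 0 < R e)
    (hwhite : ∀ p : P, ∑ e ∈ E.filter (fun e => e.1 = p), R e = 2)
    (hblack : ∀ n : N, ∑ e ∈ E.filter (fun e => e.2 = n), R e = 2)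
    (A : Finset P)
    (heq : ((E.filter (fun e => e.1 ∈ A)).image Prod.snd).card = A.card) :
    (∀ e ∈ E, e.2 ∈ (E.filter (fun e => e.1 ∈ A)).image Prod.snd → e.1 ∈ A) ∧
    (E.filter (fun e => e.2 ∈ (E.filter (fun e' => e'.1 ∈ A)).image Prod.snd)).image Prod.fst
      = A :=
  hall_equality_case_general E R hpos hwhite hblack A heq
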